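/- For every integer p ≥ 0 there exist integers i, j ≥ 0 such that u_{i+s} = u_{j+s} for all 0 ≤ s < p, and (u_{i+p}, u_{i+p+1}, u_{i+p+2}, u_{i+p+3}, u_{i+p+4}) = (0,0,2,0,0) while (u_{j+p}, u_{j+p+1}, u_{j+p+2}, u_{j+p+3}, u_{j+p+4}) = (0,0,0,0,0). -/

import Mathlib

/-- The Tribonacci morphism `0→01, 1→02, 2→0`. -/
def tribMorph : ℕ → List ℕ
  | 0 => [0, 1]
  | 1 => [0, 2]
  | _ => [0]

/-- Iterates of the Tribonacci morphism applied to `0`; `tribBlock k` is a prefix of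
the Tribonacci word of length at least `k + 1`. -/
def tribBlock : ℕ → List ℕ
  | 0 => [0]
  | k + 1 => (tribBlock k).flatMap tribMorph

/-- The Tribonacci word `TR = 0102010⋯`, the fixed point starting with `0` of the
morphism `0→01, 1→02, 2→0`. -/
def trib (i : ℕ) : ℕ := (tribBlock (i + 1)).getD i 0

/-- `N_c(i,m,n)`: the number of occurrences of the letter `c` in the `m × n` word
rectangle whose `(k,ℓ)` entry is `t_{i+k+ℓ}`. -/
def tribN (c i m n : ℕ) : ℕ :=
  ∑ k ∈ Finset.range m, ∑ l ∈ Finset.range n, if trib (i + k + l) = c then 1 else 0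

/-- `TR2`: the image of the Tribonacci word under the coding `0→0, 1→0, 2→2`. -/
def trib2 (i : ℕ) : ℕ := if trib i = 2 then 2 else 0

/-!
Call `w` right special if both `w 2 0 1` and `w 0 1 0` are factors of `TR`. Every image of a
letter under `φ : 0 ↦ 01, 1 ↦ 02, 2 ↦ 0` begins with `0`, so a factor `w a e` yields the
factor `σ w · tail (φ a) · φ e`, where `σ w = φ(w) 0` (`tribLift w`). Following the extensions
`201` and `010` through three applications of `σ` returns extensions beginning with `201` and
`010`, so `σ³` preserves right specialness, and `σ (σ x)` always ends in `010`. Starting from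
`10`, this gives right special factors `y 1 0` with `y` arbitrarily long. For a suffix `z` of
`y` of length `p`, the factors `z 10201` and `z 10010` code to `z' 00200` and `z' 00000`.
-/

lemma tribBlock_prefix_succ (k : ℕ) : tribBlock k <+: tribBlock (k + 1) := by
  induction k with
  | zero => exact ⟨[1], rfl⟩
  | succ k ih => exact ih.flatMap tribMorph

lemma tribBlock_prefix {k m : ℕ} (h : k ≤ m) : tribBlock k <+: tribBlock m := by
  induction m, h using Nat.le_induction with
  | base => exact List.prefix_refl _
  | succ m _ ih => exact ih.trans (tribBlock_prefix_succ m)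

lemma tribMorph_eq_cons (a : ℕ) : tribMorph a = 0 :: (tribMorph a).tail := by
  rcases a with _ | _ | _ <;> rfl

lemma length_le_length_flatMap_tribMorph (l : List ℕ) :
    l.length ≤ (l.flatMap tribMorph).length := by
  induction l with
  | nil => simp
  | cons a l ih =>
    rw [List.flatMap_cons, List.length_append, tribMorph_eq_cons a]
    simp only [List.length_cons]
    omega

lemma tribBlock_eq_cons (k : ℕ) : ∃ t, tribBlock k = 0 :: t := by
  induction k with
  | zero => exact ⟨[], rfl⟩
  | succ k ih =>
    obtain ⟨t, ht⟩ := ih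
    exact ⟨1 :: t.flatMap tribMorph, by simp [tribBlock, ht, tribMorph]⟩

lemma lt_length_tribBlock (k : ℕ) : k < (tribBlock k).length := by
  induction k with
  | zero => simp [tribBlock]
  | succ k ih =>
    obtain ⟨t, ht⟩ := tribBlock_eq_cons k
    have hflat := length_le_length_flatMap_tribMorph t
    rw [ht] at ih
    simp only [tribBlock, ht, List.flatMap_cons, tribMorph, List.length_append, List.length_cons,
      List.length_nil] at ih ⊢
    omega

lemma trib_eq_getElem {k n : ℕ} (hn : n < (tribBlock k).length) :
    trib n = (tribBlock k)[n] := by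
  have hsmall : tribBlock (n + 1) <+: tribBlock (max (n + 1) k) :=
    tribBlock_prefix (le_max_left _ _)
  have hlarge : tribBlock k <+: tribBlock (max (n + 1) k) := tribBlock_prefix (le_max_right _ _)
  have hn' : n < (tribBlock (n + 1)).length := (Nat.lt_succ_self n).trans (lt_length_tribBlock _)
  rw [trib, List.getD_eq_getElem _ _ hn', hsmall.getElem hn', hlarge.getElem hn]

def IsTribFactor (l : List ℕ) : Prop := ∃ k, l <:+: tribBlock k

lemma IsTribFactor.of_infix {l l' : List ℕ} (h : l <:+: l') (h' : IsTribFactor l') :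
    IsTribFactor l :=
  h'.imp fun _ hk => h.trans hk

lemma IsTribFactor.flatMap {l : List ℕ} (h : IsTribFactor l) :
    IsTribFactor (l.flatMap tribMorph) :=
  let ⟨k, hk⟩ := h
  ⟨k + 1, hk.flatMap tribMorph⟩

def OccursAt (l : List ℕ) (i : ℕ) : Prop := ∀ s < l.length, trib (i + s) = l.getD s 0

lemma IsTribFactor.exists_occursAt {l : List ℕ} (h : IsTribFactor l) : ∃ i, OccursAt l i := by
  obtain ⟨k, u, v, huv⟩ := h
  refine ⟨u.length, fun s hs => ?_⟩
  have hlen : u.length + s < (tribBlock k).length := by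
    rw [← huv]; simp only [List.length_append]; omega
  rw [trib_eq_getElem hlen, List.getD_eq_getElem _ _ hs]
  simp only [← huv, List.append_assoc]
  rw [List.getElem_append_right (by omega)]
  simp [List.getElem_append_left hs]

lemma OccursAt.of_append_left {u v : List ℕ} {i : ℕ} (h : OccursAt (u ++ v) i) : OccursAt u i :=
  fun s hs => by
    rw [h s (by simp; omega), List.getD_append _ _ _ _ hs]

lemma OccursAt.of_append_right {u v : List ℕ} {i : ℕ} (h : OccursAt (u ++ v) i) :
    OccursAt v (i + u.length) := fun s hs => by
  rw [add_assoc, h _ (by simp; omega), List.getD_append_right _ _ _ _ (by omega)]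
  simp

def tribLift (w : List ℕ) : List ℕ := w.flatMap tribMorph ++ [0]

lemma length_tribLift (w : List ℕ) : w.length < (tribLift w).length := by
  have := length_le_length_flatMap_tribMorph w
  simp only [tribLift, List.length_append, List.length_singleton]
  omega

lemma tribLift_tribLift (w : List ℕ) :
    tribLift (tribLift w) = (w.flatMap tribMorph).flatMap tribMorph ++ [0, 1, 0] := by
  simp [tribLift, tribMorph]

lemma IsTribFactor.tribLift_append {w e : List ℕ} {a : ℕ} (h : IsTribFactor (w ++ a :: e)) :
    IsTribFactor (tribLift w ++ ((tribMorph a).tail ++ e.flatMap tribMorph)) := by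
  have := h.flatMap
  rw [List.flatMap_append, List.flatMap_cons, tribMorph_eq_cons a] at this
  simpa [tribLift] using this

def IsRightSpecial (w : List ℕ) : Prop :=
  IsTribFactor (w ++ [2, 0, 1]) ∧ IsTribFactor (w ++ [0, 1, 0])

lemma IsRightSpecial.tribLift_tribLift_tribLift {w : List ℕ} (h : IsRightSpecial w) :
    IsRightSpecial (tribLift (tribLift (tribLift w))) := by
  obtain ⟨h2, h0⟩ := h
  have h2' : IsTribFactor (tribLift (tribLift (tribLift w)) ++ [2, 0, 1, 0, 0, 1, 0, 2, 0, 1]) :=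
    ((h2.tribLift_append (e := [0, 1])).tribLift_append (e := [1, 0, 2])).tribLift_append
      (e := [0, 2, 0, 1, 0])
  have h0' :
      IsTribFactor (tribLift (tribLift (tribLift w)) ++ [0, 1, 0, 2, 0, 1, 0, 1, 0, 2, 0, 1, 0]) :=
    ((h0.tribLift_append (e := [1, 0])).tribLift_append (e := [0, 2, 0, 1])).tribLift_append
      (e := [0, 1, 0, 0, 1, 0, 2])
  exact ⟨h2'.of_infix ⟨[], [0, 0, 1, 0, 2, 0, 1], by simp⟩,
    h0'.of_infix ⟨[], [2, 0, 1, 0, 1, 0, 2, 0, 1, 0], by simp⟩⟩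

lemma exists_long_isRightSpecial (n : ℕ) :
    ∃ y, n ≤ y.length ∧ IsRightSpecial (y ++ [1, 0]) := by
  induction n with
  | zero => exact ⟨[], le_rfl, ⟨4, by decide⟩, ⟨4, by decide⟩⟩
  | succ n ih =>
    obtain ⟨y, hy, hspecial⟩ := ih
    set w := y ++ [1, 0]
    refine ⟨((tribLift w).flatMap tribMorph).flatMap tribMorph ++ [0], ?_, ?_⟩
    · have hgrowth := (length_tribLift w).trans <| (length_tribLift _).trans (length_tribLift _)
      rw [tribLift_tribLift] at hgrowth
      simp only [w, List.length_append, List.length_cons, List.length_nil] at hgrowth ⊢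
      omega
    · have hlift := hspecial.tribLift_tribLift_tribLift
      rw [tribLift_tribLift (tribLift w)] at hlift
      simpa using hlift

lemma exists_factors_of_length (p : ℕ) :
    ∃ z : List ℕ, z.length = p ∧
      IsTribFactor (z ++ [1, 0, 2, 0, 1]) ∧ IsTribFactor (z ++ [1, 0, 0, 1, 0]) := by
  obtain ⟨y, hy, h2, h0⟩ := exists_long_isRightSpecial p
  have hsuffix (e : List ℕ) : y.drop (y.length - p) ++ e <:+: y ++ e := by
    rw [← List.drop_append_of_le_length (Nat.sub_le _ _)]
    exact (List.drop_suffix _ _).isInfix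
  refine ⟨y.drop (y.length - p), by simp; omega, ?_, ?_⟩
  · exact h2.of_infix (by simpa using hsuffix [1, 0, 2, 0, 1])
  · exact h0.of_infix (by simpa using hsuffix [1, 0, 0, 1, 0])

theorem trib2_common_factor_distinct_extensions (p : ℕ) :
    ∃ i j : ℕ, (∀ s : ℕ, s < p → trib2 (i + s) = trib2 (j + s)) ∧
      trib2 (i + p) = 0 ∧ trib2 (i + p + 1) = 0 ∧ trib2 (i + p + 2) = 2 ∧
      trib2 (i + p + 3) = 0 ∧ trib2 (i + p + 4) = 0 ∧
      trib2 (j + p) = 0 ∧ trib2 (j + p + 1) = 0 ∧ trib2 (j + p + 2) = 0 ∧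
      trib2 (j + p + 3) = 0 ∧ trib2 (j + p + 4) = 0 := by
  obtain ⟨z, rfl, h2, h0⟩ := exists_factors_of_length p
  obtain ⟨i, hi⟩ := h2.exists_occursAt
  obtain ⟨j, hj⟩ := h0.exists_occursAt
  refine ⟨i, j, fun s hs => ?_, ?_⟩
  · rw [trib2, trib2, hi.of_append_left s hs, hj.of_append_left s hs]
  · have hi' : ∀ s < 5, trib (i + z.length + s) = [1, 0, 2, 0, 1].getD s 0 :=
      hi.of_append_right
    have hj' : ∀ s < 5, trib (j + z.length + s) = [1, 0, 0, 1, 0].getD s 0 :=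
      hj.of_append_right
    have hi0 : trib (i + z.length) = 1 := hi' 0 (by norm_num)
    have hj0 : trib (j + z.length) = 1 := hj' 0 (by norm_num)
    simp [trib2, hi0, hj0, hi' 1, hi' 2, hi' 3, hi' 4, hj' 1, hj' 2, hj' 3, hj' 4]
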